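/- arXiv:1707.09060 — 2 statements merged into one kernel-verified Lean document; each statement's English description precedes it below -/
import Mathlib

section
/- Dynamic fit of BanSaP with one-point feedback (Theorem 1, fit bound): Under the one-point BanSaP setting, for every constant β > 0 and every realization of the random sequence u_1, …, u_T, setting ‖λ̄‖ := max_{1 ≤ t ≤ T+1} ‖λ_t‖, the dynamic fit satisfies ‖[ Σ_{t=1}^T g_t(x_{1,t}) ]⁺‖ ≤ ‖λ̄‖/μ + G²√N·T/(2β) + δG√N·T + β√N·T·( α²d²F²/δ² + α²G²‖λ̄‖² ), where [·]⁺ denotes the entrywise positive part. -/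
/-!
Since `λ_1 = 0`, the dual update telescopes in each coordinate `n` to
`Σ_t (g_t^n(x̂_t) + ⟨∇g_t^n(x̂_t), x̂_{t+1} - x̂_t⟩) ≤ λ_{T+1}^n / μ`. Moving from `x̂_t` to the
played point `x̂_t + δ u_t` costs `δ G` (Lipschitz bound), and dropping the linear term costs
`G ‖x̂_{t+1} - x̂_t‖`. Both `x̂_t` and `x̂_{t+1}` lie in the convex set `(1 - δ/r) X`, onto
which the projection is nonexpansive, so `‖x̂_{t+1} - x̂_t‖ ≤ |α| (d F / δ + G ‖λ_t‖)`; the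
gradient term `Σ_n λ_t^n ∇g_t^n` is the adjoint Jacobian applied to `λ_t`, whence the factor
`G`. Young's inequality `G b ≤ G² / (2β) + β b² / 2` then gives the quadratic terms, and the
positive part of a vector bounded coordinatewise by `λ_{T+1} / μ + c` has norm at most
`‖λ_{T+1}‖ / μ + √N c`.
-/

open Metric Finset
open scoped Pointwise RealInnerProductSpace

def posPart' {N : ℕ} (v : EuclideanSpace ℝ (Fin N)) : EuclideanSpace ℝ (Fin N) :=
  WithLp.toLp 2 (fun n => max (v n) 0)

lemma Nat.forall_mem_Icc_of_succ {P : ℕ → Prop} {T : ℕ} (h1 : P 1)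
    (hsucc : ∀ t ∈ Icc 1 T, P (t + 1)) : ∀ t ∈ Icc 1 (T + 1), P t := by
  intro t ht
  obtain ⟨ht1, htT⟩ := Finset.mem_Icc.mp ht
  rcases Nat.lt_or_ge t 2 with ht2 | ht2
  · obtain rfl : t = 1 := by omega
    exact h1
  · obtain ⟨s, rfl⟩ : ∃ s, t = s + 1 := ⟨t - 1, by omega⟩
    exact hsucc s (Finset.mem_Icc.mpr ⟨by omega, by omega⟩)

lemma Finset.sum_Icc_le_sub_of_le_sub {a q : ℕ → ℝ} {T : ℕ}
    (h : ∀ t ∈ Icc 1 T, a t ≤ q (t + 1) - q t) :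
    ∑ t ∈ Icc 1 T, a t ≤ q (T + 1) - q 1 :=
  calc ∑ t ∈ Icc 1 T, a t ≤ ∑ t ∈ Icc 1 T, (q (t + 1) - q t) := sum_le_sum h
    _ = q (T + 1) - q 1 := by
      rw [← Finset.Ico_add_one_right_eq_Icc, Finset.sum_Ico_sub q (by omega)]

lemma sum_le_div_add_mul_of_le_add {a b q : ℕ → ℝ} {μ c : ℝ} {T : ℕ} (hμ : 0 < μ)
    (hq : ∀ t ∈ Icc 1 T, q t + μ * a t ≤ q (t + 1)) (hb : ∀ t ∈ Icc 1 T, b t ≤ a t + c) :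
    ∑ t ∈ Icc 1 T, b t ≤ (q (T + 1) - q 1) / μ + T * c := by
  have hqa : μ * ∑ t ∈ Icc 1 T, a t ≤ q (T + 1) - q 1 := by
    rw [Finset.mul_sum]
    exact Finset.sum_Icc_le_sub_of_le_sub fun t ht => by linarith [hq t ht]
  calc ∑ t ∈ Icc 1 T, b t ≤ ∑ t ∈ Icc 1 T, (a t + c) := sum_le_sum hb
    _ = ∑ t ∈ Icc 1 T, a t + T * c := by simp [sum_add_distrib]
    _ ≤ (q (T + 1) - q 1) / μ + T * c := by gcongr; rwa [le_div_iff₀' hμ]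

lemma mul_le_div_add_mul_of_le_abs_mul_add {G β a b P Q : ℝ} (hβ : 0 < β) (hb : 0 ≤ b)
    (hbPQ : b ≤ |a| * (P + Q)) :
    G * b ≤ G ^ 2 / (2 * β) + β * (a ^ 2 * P ^ 2 + a ^ 2 * Q ^ 2) := by
  have hyoung : G * b ≤ G ^ 2 / (2 * β) + β / 2 * b ^ 2 := by
    have : G ^ 2 / (2 * β) + β / 2 * b ^ 2 - G * b = (G - β * b) ^ 2 / (2 * β) := by
      field_simp; ring
    nlinarith [div_nonneg (sq_nonneg (G - β * b)) (by positivity : (0 : ℝ) ≤ 2 * β)]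
  have hb2 : b ^ 2 ≤ 2 * (a ^ 2 * P ^ 2 + a ^ 2 * Q ^ 2) :=
    calc b ^ 2 ≤ (|a| * (P + Q)) ^ 2 := pow_le_pow_left₀ hb hbPQ 2
      _ = a ^ 2 * (P + Q) ^ 2 := by rw [mul_pow, sq_abs]
      _ ≤ a ^ 2 * (2 * (P ^ 2 + Q ^ 2)) := by gcongr; exact add_sq_le
      _ = 2 * (a ^ 2 * P ^ 2 + a ^ 2 * Q ^ 2) := by ring
  nlinarith

lemma Convex.add_smul_mem_of_mem_smul {E : Type*} [NormedAddCommGroup E] [NormedSpace ℝ E]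
    {X : Set E} (hX : Convex ℝ X) {r δ : ℝ} (hr : 0 < r) (hball : closedBall 0 r ⊆ X)
    (hδ : 0 ≤ δ) (hδr : δ / r ≤ 1) {x u : E} (hx : x ∈ (1 - δ / r) • X) (hu : ‖u‖ ≤ 1) :
    x + δ • u ∈ X := by
  obtain ⟨y, hy, rfl⟩ := Set.mem_smul_set.mp hx
  have hru : r • u ∈ X := hball <| by
    rw [mem_closedBall_zero_iff, norm_smul, Real.norm_of_nonneg hr.le]
    exact mul_le_of_le_one_right hr.le hu
  have hcomb : (1 - δ / r) • y + δ • u = (1 - δ / r) • y + (δ / r) • (r • u) := by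
    rw [smul_smul, div_mul_cancel₀ _ hr.ne']
  rw [hcomb]
  exact hX hy hru (by linarith) (by positivity) (by ring)

section InnerProductSpace

variable {E : Type*} [NormedAddCommGroup E] [InnerProductSpace ℝ E]

lemma Convex.norm_sub_le_of_forall_norm_sub_le {K : Set E} (hK : Convex ℝ K) {p q w : E}
    (hq : q ∈ K) (hmin : ∀ z ∈ K, ‖q - p‖ ≤ ‖z - p‖) (hw : w ∈ K) : ‖q - w‖ ≤ ‖p - w‖ := by
  have hinf : ‖p - q‖ = ⨅ z : K, ‖p - z‖ := by
    have : Nonempty K := ⟨⟨q, hq⟩⟩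
    have hbdd : BddBelow (Set.range fun z : K => ‖p - z‖) :=
      ⟨0, Set.forall_mem_range.2 fun _ => norm_nonneg _⟩
    refine le_antisymm (le_ciInf fun z => ?_) (ciInf_le hbdd ⟨q, hq⟩)
    simpa only [norm_sub_rev p] using hmin z z.2
  have hobtuse : 0 ≤ ⟪p - q, q - w⟫ := by
    rw [← neg_sub w q, inner_neg_right, neg_nonneg]
    exact (norm_eq_iInf_iff_real_inner_le_zero hK hq).mp hinf w hw
  have hsq : ‖q - w‖ ^ 2 ≤ ‖p - w‖ ^ 2 := by
    rw [show p - w = (p - q) + (q - w) by abel, norm_add_sq_real]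
    nlinarith [sq_nonneg ‖p - q‖]
  exact (pow_le_pow_iff_left₀ (norm_nonneg _) (norm_nonneg _) two_ne_zero).mp hsq

variable [CompleteSpace E] {ι : Type*} [Fintype ι]

lemma sum_smul_gradient_eq_adjoint_fderiv {g : E → EuclideanSpace ℝ ι} {x : E}
    (hg : DifferentiableAt ℝ g x) (c : EuclideanSpace ℝ ι) :
    ∑ i, c i • gradient (fun y => g y i) x = (fderiv ℝ g x).adjoint c := by
  refine ext_inner_right ℝ fun h => ?_
  have hcomp (i : ι) : fderiv ℝ (fun y => g y i) x = PiLp.proj 2 _ i ∘L fderiv ℝ g x :=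
    ((PiLp.hasFDerivAt_apply 2 (g x) i).comp x hg.hasFDerivAt :).fderiv
  rw [ContinuousLinearMap.adjoint_inner_left, sum_inner, PiLp.inner_apply]
  refine Finset.sum_congr rfl fun i _ => ?_
  rw [real_inner_smul_left, gradient, InnerProductSpace.toDual_symm_apply, hcomp]
  simp [mul_comm]

lemma norm_sum_smul_gradient_le {g : E → EuclideanSpace ℝ ι} {x : E}
    (hg : DifferentiableAt ℝ g x) (c : EuclideanSpace ℝ ι) :
    ‖∑ i, c i • gradient (fun y => g y i) x‖ ≤ ‖fderiv ℝ g x‖ * ‖c‖ := by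
  rw [sum_smul_gradient_eq_adjoint_fderiv hg,
    ← LinearIsometryEquiv.norm_map ContinuousLinearMap.adjoint (fderiv ℝ g x)]
  exact ContinuousLinearMap.le_opNorm _ _

lemma le_add_inner_gradient_add_mul {h : E → ℝ} {G : ℝ} {x : E}
    (hlip : ∀ y z, |h y - h z| ≤ G * ‖y - z‖) (hgrad : ‖gradient h x‖ ≤ G) (y z : E) :
    h (x + z) ≤ h x + ⟪gradient h x, y⟫ + G * (‖z‖ + ‖y‖) := by
  have hz : h (x + z) - h x ≤ G * ‖z‖ := by
    simpa using (le_abs_self _).trans (hlip (x + z) x)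
  have hy : -⟪gradient h x, y⟫ ≤ G * ‖y‖ :=
    calc -⟪gradient h x, y⟫ ≤ ‖gradient h x‖ * ‖y‖ :=
          (neg_le_abs _).trans (abs_real_inner_le_norm _ _)
      _ ≤ G * ‖y‖ := by gcongr
  linarith

lemma sum_le_of_dual_update {h : ℕ → E → ℝ} {x z : ℕ → E} {q : ℕ → ℝ} {μ G δ A : ℝ} {T : ℕ}
    (hμ : 0 < μ)
    (hq : ∀ t ∈ Icc 1 T,
      q (t + 1) = max (q t + μ * (h t (x t) + ⟪gradient (h t) (x t), x (t + 1) - x t⟫)) 0)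
    (hlip : ∀ t ∈ Icc 1 T, ∀ y y', |h t y - h t y'| ≤ G * ‖y - y'‖)
    (hgrad : ∀ t ∈ Icc 1 T, ‖gradient (h t) (x t)‖ ≤ G) (hz : ∀ t ∈ Icc 1 T, ‖z t‖ ≤ δ)
    (hdrift : ∀ t ∈ Icc 1 T, G * ‖x (t + 1) - x t‖ ≤ A) :
    ∑ t ∈ Icc 1 T, h t (x t + z t) ≤ (q (T + 1) - q 1) / μ + T * (δ * G + A) := by
  refine sum_le_div_add_mul_of_le_add hμ (fun t ht => (hq t ht).symm ▸ le_max_left _ _)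
    fun t ht => ?_
  have hstep := le_add_inner_gradient_add_mul (hlip t ht) (hgrad t ht) (x (t + 1) - x t) (z t)
  have hGz : G * ‖z t‖ ≤ δ * G := by
    rw [mul_comm δ]
    exact mul_le_mul_of_nonneg_left (hz t ht) ((norm_nonneg _).trans (hgrad t ht))
  linarith [hdrift t ht]

lemma norm_sub_le_of_projected_step {K : Set E} (hK : Convex ℝ K) {x x' u : E} {α s : ℝ}
    {g : E → EuclideanSpace ℝ ι} {c : EuclideanSpace ℝ ι} (hx : x ∈ K) (hx' : x' ∈ K)
    (hmin : ∀ z ∈ K, ‖x' - (x - α • (s • u + ∑ i, c i • gradient (fun y => g y i) x))‖ ≤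
      ‖z - (x - α • (s • u + ∑ i, c i • gradient (fun y => g y i) x))‖)
    (hu : ‖u‖ ≤ 1) (hg : DifferentiableAt ℝ g x) :
    ‖x' - x‖ ≤ |α| * (|s| + ‖fderiv ℝ g x‖ * ‖c‖) :=
  calc ‖x' - x‖ ≤ ‖x - α • (s • u + ∑ i, c i • gradient (fun y => g y i) x) - x‖ :=
        hK.norm_sub_le_of_forall_norm_sub_le hx' hmin hx
    _ = |α| * ‖s • u + ∑ i, c i • gradient (fun y => g y i) x‖ := by
        rw [sub_sub_cancel_left, norm_neg, norm_smul, Real.norm_eq_abs]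
    _ ≤ |α| * (|s| + ‖fderiv ℝ g x‖ * ‖c‖) := by
        gcongr
        refine (norm_add_le _ _).trans (add_le_add ?_ (norm_sum_smul_gradient_le hg c))
        rw [norm_smul, Real.norm_eq_abs]
        exact mul_le_of_le_one_right (abs_nonneg s) hu

lemma mul_norm_sub_le_of_projected_step {K : Set E} (hK : Convex ℝ K) {x x' u : E}
    {α s β G P L : ℝ} {g : E → EuclideanSpace ℝ ι} {c : EuclideanSpace ℝ ι} (hx : x ∈ K)
    (hx' : x' ∈ K)
    (hmin : ∀ z ∈ K, ‖x' - (x - α • (s • u + ∑ i, c i • gradient (fun y => g y i) x))‖ ≤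
      ‖z - (x - α • (s • u + ∑ i, c i • gradient (fun y => g y i) x))‖)
    (hu : ‖u‖ ≤ 1) (hg : DifferentiableAt ℝ g x) (hβ : 0 < β) (hs : |s| ≤ P)
    (hgG : ‖fderiv ℝ g x‖ ≤ G) (hc : ‖c‖ ≤ L) :
    G * ‖x' - x‖ ≤ G ^ 2 / (2 * β) + β * (α ^ 2 * P ^ 2 + α ^ 2 * (G * L) ^ 2) := by
  refine mul_le_div_add_mul_of_le_abs_mul_add hβ (norm_nonneg _) <|
    (norm_sub_le_of_projected_step hK hx hx' hmin hu hg).trans ?_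
  gcongr |α| * (?_ + ?_)
  exact mul_le_mul hgG hc (norm_nonneg _) ((norm_nonneg _).trans hgG)

end InnerProductSpace

section EuclideanSpace

variable {ι : Type*} [Fintype ι]

lemma EuclideanSpace.norm_le_norm_of_forall_abs_le {v w : EuclideanSpace ℝ ι}
    (h : ∀ i, |v i| ≤ |w i|) : ‖v‖ ≤ ‖w‖ := by
  rw [EuclideanSpace.norm_eq, EuclideanSpace.norm_eq]
  gcongr with i
  simpa only [Real.norm_eq_abs] using h i

lemma EuclideanSpace.norm_toLp_const (c : ℝ) :
    ‖WithLp.toLp 2 (fun _ : ι => c)‖ = √(Fintype.card ι) * |c| := by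
  rw [EuclideanSpace.norm_eq]
  simp [Real.sqrt_mul (Nat.cast_nonneg _), Real.sqrt_sq_eq_abs]

end EuclideanSpace

lemma norm_posPart'_le_add {N : ℕ} {v w : EuclideanSpace ℝ (Fin N)} {c L : ℝ} (hc : 0 ≤ c)
    (hw : ‖w‖ ≤ L) (h : ∀ n, v n ≤ w n + c) : ‖posPart' v‖ ≤ L + √N * c := by
  have hv (n : Fin N) : posPart' v n = max (v n) 0 := rfl
  have hw' (n : Fin N) : posPart' w n = max (w n) 0 := rfl
  calc ‖posPart' v‖ ≤ ‖posPart' w + WithLp.toLp 2 (fun _ : Fin N => c)‖ := by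
        refine EuclideanSpace.norm_le_norm_of_forall_abs_le fun n => ?_
        simp only [PiLp.add_apply, hv, hw']
        rw [abs_of_nonneg (le_max_right _ _), abs_of_nonneg (by positivity)]
        exact max_le ((h n).trans (by gcongr; exact le_max_left _ _)) (by positivity)
    _ ≤ ‖posPart' w‖ + ‖WithLp.toLp 2 (fun _ : Fin N => c)‖ := norm_add_le _ _
    _ ≤ L + √N * c := by
        rw [EuclideanSpace.norm_toLp_const, Fintype.card_fin, abs_of_nonneg hc]
        gcongr
        refine le_trans (EuclideanSpace.norm_le_norm_of_forall_abs_le fun n => ?_) hw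
        rw [hw', abs_of_nonneg (le_max_right _ _)]
        exact max_le (le_abs_self _) (abs_nonneg _)

/-- Dynamic fit of BanSaP with one-point feedback (Theorem 1, fit bound):
for any realization of the perturbations `u_1,…,u_T` and any `β > 0`, with
`λ̄ = max_{1 ≤ t ≤ T+1} ‖λ_t‖`, the dynamic fit satisfies
`‖[Σ_t g_t(x_{1,t})]⁺‖ ≤ λ̄/μ + G²√N T/(2β) + δG√N T + β√N T(α²d²F²/δ² + α²G²λ̄²)`. -/
theorem bansap_one_point_dynamic_fit
    (d N T : ℕ)
    (X : Set (EuclideanSpace ℝ (Fin d)))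
    (hXconv : Convex ℝ X)
    (r F G : ℝ) (hr : 0 < r)
    (hXball : closedBall (0 : EuclideanSpace ℝ (Fin d)) r ⊆ X)
    (f : ℕ → EuclideanSpace ℝ (Fin d) → ℝ)
    (g : ℕ → EuclideanSpace ℝ (Fin d) → EuclideanSpace ℝ (Fin N))
    (hf_bdd : ∀ t ∈ Icc 1 T, ∀ x ∈ X, |f t x| ≤ F)
    (hg_diff : ∀ t ∈ Icc 1 T, ∀ n, Differentiable ℝ (fun x => g t x n))
    (hg_grad : ∀ t ∈ Icc 1 T, ∀ n, ∀ x ∈ X, ‖gradient (fun y => g t y n) x‖ ≤ G)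
    (hg_lip : ∀ t ∈ Icc 1 T, ∀ n, ∀ x y, |g t x n - g t y n| ≤ G * ‖x - y‖)
    (hg_jac : ∀ t ∈ Icc 1 T, ∀ x ∈ X, ‖fderiv ℝ (g t) x‖ ≤ G)
    (α μ δ γ : ℝ) (hμ : 0 < μ) (hδ : 0 < δ)
    (hγ : γ = δ / r) (hγ1 : γ < 1)
    (u : ℕ → EuclideanSpace ℝ (Fin d))
    (hu : ∀ t ∈ Icc 1 T, ‖u t‖ = 1)
    (xhat : ℕ → EuclideanSpace ℝ (Fin d))
    (lam : ℕ → EuclideanSpace ℝ (Fin N))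
    (hx1 : xhat 1 ∈ (1 - γ) • X)
    (hlam1 : lam 1 = 0)
    (hxrec : ∀ t ∈ Icc 1 T,
      xhat (t + 1) ∈ (1 - γ) • X ∧
      ∀ z ∈ (1 - γ) • X,
        ‖xhat (t + 1) - (xhat t - α • (((d : ℝ) / δ * f t (xhat t + δ • u t)) • u t
            + ∑ n, lam t n • gradient (fun y => g t y n) (xhat t)))‖ ≤
        ‖z - (xhat t - α • (((d : ℝ) / δ * f t (xhat t + δ • u t)) • u t
            + ∑ n, lam t n • gradient (fun y => g t y n) (xhat t)))‖)
    (hlamrec : ∀ t ∈ Icc 1 T, ∀ n,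
      lam (t + 1) n = max (lam t n + μ * (g t (xhat t) n
        + ⟪gradient (fun y => g t y n) (xhat t), xhat (t + 1) - xhat t⟫)) 0)
    (β : ℝ) (hβ : 0 < β)
    (lambar : ℝ)
    (hlambar : lambar =
      (Icc 1 (T + 1)).sup' (Finset.nonempty_Icc.mpr (by omega)) (fun t => ‖lam t‖)) :
    ‖posPart' (∑ t ∈ Icc 1 T, g t (xhat t + δ • u t))‖ ≤
      lambar / μ + G ^ 2 * Real.sqrt N * T / (2 * β) + δ * G * Real.sqrt N * T
        + β * Real.sqrt N * T *
            (α ^ 2 * (d : ℝ) ^ 2 * F ^ 2 / δ ^ 2 + α ^ 2 * G ^ 2 * lambar ^ 2) := by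
  subst hγ
  set A := G ^ 2 / (2 * β) + β * (α ^ 2 * ((d : ℝ) / δ * F) ^ 2 + α ^ 2 * (G * lambar) ^ 2)
  have hIcc : Icc 1 T ⊆ Icc 1 (T + 1) := Icc_subset_Icc_right T.le_succ
  have hxK : ∀ t ∈ Icc 1 T, xhat t ∈ (1 - δ / r) • X := fun t ht =>
    Nat.forall_mem_Icc_of_succ (P := (xhat · ∈ (1 - δ / r) • X)) hx1 (fun s hs => (hxrec s hs).1)
      t (hIcc ht)
  have hmem : ∀ t ∈ Icc 1 T, ∀ v, ‖v‖ ≤ 1 → xhat t + δ • v ∈ X := fun t ht _ hv =>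
    hXconv.add_smul_mem_of_mem_smul hr hXball hδ.le hγ1.le (hxK t ht) hv
  have hxX : ∀ t ∈ Icc 1 T, xhat t ∈ X := fun t ht => by simpa using hmem t ht 0 (by simp)
  have hlam : ∀ t ∈ Icc 1 (T + 1), ‖lam t‖ ≤ lambar := fun t ht =>
    hlambar ▸ le_sup' (fun t => ‖lam t‖) ht
  have hdrift : ∀ t ∈ Icc 1 T, G * ‖xhat (t + 1) - xhat t‖ ≤ A := fun t ht =>
    have hut := (hu t ht).le
    mul_norm_sub_le_of_projected_step (hXconv.smul _) (hxK t ht) (hxrec t ht).1 (hxrec t ht).2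
      hut (differentiableAt_euclidean.mpr fun n => hg_diff t ht n _) hβ
      (by rw [abs_mul, abs_of_nonneg (by positivity)]; gcongr; exact hf_bdd t ht _ (hmem t ht _ hut))
      (hg_jac t ht _ (hxX t ht)) (hlam t (hIcc ht))
  have hcoord (n : Fin N) : ∑ t ∈ Icc 1 T, g t (xhat t + δ • u t) n ≤
      (lam (T + 1) n - lam 1 n) / μ + T * (δ * G + A) :=
    sum_le_of_dual_update (h := fun t y => g t y n) (q := fun t => lam t n) hμ
      (fun t ht => hlamrec t ht n) (fun t ht => hg_lip t ht n)
      (fun t ht => hg_grad t ht n _ (hxX t ht))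
      (fun t ht => by rw [norm_smul, hu t ht, Real.norm_of_nonneg hδ.le, mul_one]) hdrift
  have hc : 0 ≤ (T : ℝ) * (δ * G + A) := by
    rcases T.eq_zero_or_pos with rfl | hT
    · simp
    · have := (norm_nonneg _).trans (hg_jac 1 (by simpa) _ (hxX 1 (by simpa)))
      positivity
  have hlamμ : ‖μ⁻¹ • lam (T + 1)‖ ≤ lambar / μ := by
    rw [norm_smul, Real.norm_of_nonneg (inv_nonneg.mpr hμ.le), inv_mul_eq_div]
    exact div_le_div_of_nonneg_right (hlam (T + 1) (by simp)) hμ.le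
  calc _ ≤ lambar / μ + √N * (T * (δ * G + A)) := norm_posPart'_le_add hc hlamμ fun n => by
        simpa [hlam1, div_eq_inv_mul, WithLp.ofLp_sum] using hcoord n
    _ = _ := by ring
end

section
/- Cumulative constraint violation bound from the dual recursion (Lemma in Appendix, eq. (31)): Let μ, β, G > 0 and let g_t : ℝ^d → ℝ^N for t = 1,…,T have differentiable components g_t^n with ‖∇g_t^n(x̂_t)‖ ≤ G. Let x̂_1,…,x̂_{T+1} ∈ ℝ^d and λ_1,…,λ_{T+1} ∈ ℝ^N satisfy λ_1 = 0 and λ_{t+1} = [ λ_t + μ( g_t(x̂_t) + J_t(x̂_{t+1} − x̂_t) ) ]⁺ for each t, where J_t(y) ∈ ℝ^N has entries ⟨∇g_t^n(x̂_t), y⟩ and [·]⁺ is the entrywise positive part. Then entrywise, Σ_{t=1}^T g_t(x̂_t) ≤ λ_{T+1}/μ + (G²T/(2β))·1 + (β/2)·( Σ_{t=1}^T ‖x̂_{t+1} − x̂_t‖² )·1, where 1 ∈ ℝ^N is the all-ones vector. -/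
open Finset
open scoped RealInnerProductSpace

/-- Cumulative constraint violation bound from the dual recursion (eq. (31)):
if `λ_1 = 0` and `λ_{t+1} = [λ_t + μ(g_t(x̂_t) + J_t(x̂_{t+1} − x̂_t))]⁺` with
`‖∇g_t^n(x̂_t)‖ ≤ G`, then entrywise
`Σ_t g_t(x̂_t) ≤ λ_{T+1}/μ + (G²T/(2β))·1 + (β/2)(Σ_t ‖x̂_{t+1} − x̂_t‖²)·1`. -/
theorem cumulative_constraint_violation_bound
    (d N T : ℕ) (μ β G : ℝ) (hμ : 0 < μ) (hβ : 0 < β) (hG : 0 < G)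
    (g : ℕ → EuclideanSpace ℝ (Fin d) → EuclideanSpace ℝ (Fin N))
    (xhat : ℕ → EuclideanSpace ℝ (Fin d))
    (lam : ℕ → EuclideanSpace ℝ (Fin N))
    (hg_diff : ∀ t ∈ Icc 1 T, ∀ n,
      DifferentiableAt ℝ (fun y => g t y n) (xhat t))
    (hg_grad : ∀ t ∈ Icc 1 T, ∀ n,
      ‖gradient (fun y => g t y n) (xhat t)‖ ≤ G)
    (hlam1 : lam 1 = 0)
    (hlamrec : ∀ t ∈ Icc 1 T, ∀ n,
      lam (t + 1) n = max (lam t n + μ * (g t (xhat t) n +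
        ⟪gradient (fun y => g t y n) (xhat t), xhat (t + 1) - xhat t⟫)) 0) :
    ∀ n, ∑ t ∈ Icc 1 T, g t (xhat t) n ≤
      lam (T + 1) n / μ + G ^ 2 * T / (2 * β) +
        β / 2 * ∑ t ∈ Icc 1 T, ‖xhat (t + 1) - xhat t‖ ^ 2 := by
  intro n
  have key : ∀ t ∈ Icc 1 T, g t (xhat t) n ≤
      (lam (t + 1) n - lam t n) / μ + G ^ 2 / (2 * β) +
        β / 2 * ‖xhat (t + 1) - xhat t‖ ^ 2 := by
    intro t ht
    have h1 := hlamrec t ht n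
    set ip : ℝ := ⟪gradient (fun y => g t y n) (xhat t), xhat (t + 1) - xhat t⟫ with hip
    have h2 : lam t n + μ * (g t (xhat t) n + ip) ≤ lam (t + 1) n := by
      rw [h1]; exact le_max_left _ _
    have hin : -ip ≤ G ^ 2 / (2 * β) + β / 2 * ‖xhat (t + 1) - xhat t‖ ^ 2 := by
      have habs : |ip| ≤ ‖gradient (fun y => g t y n) (xhat t)‖ * ‖xhat (t + 1) - xhat t‖ :=
        abs_real_inner_le_norm _ _
      have hgradG := hg_grad t ht n
      have hnn : (0:ℝ) ≤ ‖xhat (t + 1) - xhat t‖ := norm_nonneg _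
      have h3 : -ip ≤ G * ‖xhat (t + 1) - xhat t‖ := by
        nlinarith [neg_abs_le ip]
      have hc : 2 * β * (G ^ 2 / (2 * β)) = G ^ 2 := by field_simp
      nlinarith [sq_nonneg (G - β * ‖xhat (t + 1) - xhat t‖), hβ, hc, h3]
    have hdiv := div_mul_cancel₀ (lam (t + 1) n - lam t n) hμ.ne'
    nlinarith [mul_le_mul_of_nonneg_left hin hμ.le]
  have hsum := Finset.sum_le_sum key
  have htel : ∑ t ∈ Icc 1 T, (lam (t + 1) n - lam t n) = lam (T + 1) n := by
    have := Finset.sum_range_sub (fun i => lam (i + 1) n) T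
    rw [← Finset.Ico_add_one_right_eq_Icc, Finset.sum_Ico_eq_sum_range]
    simpa [hlam1, Nat.add_comm] using this
  calc ∑ t ∈ Icc 1 T, g t (xhat t) n
      ≤ ∑ t ∈ Icc 1 T, ((lam (t + 1) n - lam t n) / μ + G ^ 2 / (2 * β) +
        β / 2 * ‖xhat (t + 1) - xhat t‖ ^ 2) := hsum
    _ = (∑ t ∈ Icc 1 T, (lam (t + 1) n - lam t n)) / μ + T * (G ^ 2 / (2 * β)) +
        β / 2 * ∑ t ∈ Icc 1 T, ‖xhat (t + 1) - xhat t‖ ^ 2 := by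
        rw [Finset.sum_add_distrib, Finset.sum_add_distrib, Finset.sum_div,
          ← Finset.mul_sum]
        simp [Nat.card_Icc]
    _ = lam (T + 1) n / μ + G ^ 2 * T / (2 * β) +
        β / 2 * ∑ t ∈ Icc 1 T, ‖xhat (t + 1) - xhat t‖ ^ 2 := by
        rw [htel]; ring
end
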